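/- Let U ⊆ ℝ^(n+2) be open and Z : U → ℝ^(n+2) differentiable with fderiv ℝ Z p = φ(p) • id for a function φ : U → ℝ and every p ∈ U. Let p ∈ U with η(Z p, Z p) ≠ 0 and let ε ∈ {-1, 1} be such that ε * η(Z p, Z p) > 0. Then for every v ∈ ℝ^(n+2), the derivative of q ↦ √|η(Z q, Z q)| at p in the direction v equals ε * φ(p) * η(Z p, v) / √|η(Z p, Z p)|. Consequently, if (ξ, N) is a null frame on U and v is a screen vector at p, this derivative equals ε * φ(p) * η(Z*(p), v) / √|η(Z p, Z p)| — the flat-ambient form of the paper's formula ∇*|Z| = (ε_Z φ / |Z|) Z* for the screen gradient of the norm of a closed conformal field. -/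

import Mathlib

/-! Because `DZ = φ • id`, the derivative of `q ↦ η(Z q, Z q)` at `p` is `v ↦ 2 φ(p) η(Z p, v)`.
The derivative of `|·|` at `η(Z p, Z p)` is its sign, which is `ε`, so the chain rule through `|·|`
and `√·` yields `ε φ(p) η(Z p, v) / √|η(Z p, Z p)|`. For a screen vector `v` one has `η(Z*(p), v) = η(Z p, v)`,
since `Z p - Z*(p)` lies in the span of `ξ p` and `N p`. -/

open scoped BigOperators

noncomputable section

/-- Euclidean space `ℝ^m`. -/
abbrev E (m : ℕ) : Type := EuclideanSpace ℝ (Fin m)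

/-- The Minkowski bilinear form `η(x,y) = -(x 0)(y 0) + ∑_{i≥1} (x i)(y i)` on `ℝ^(n+2)`. -/
def eta {n : ℕ} (x y : E (n + 2)) : ℝ :=
  (∑ i, x i * y i) - 2 * (x 0 * y 0)

/-- Screen projection `P_p(w) = w - η(w,N)ξ - η(w,ξ)N` determined by the null frame at a point. -/
def sproj {n : ℕ} (xi N w : E (n + 2)) : E (n + 2) :=
  w - eta w N • xi - eta w xi • N

/-- Screen shape operator `A*_ξ(p)(v) = -P_p(D_v ξ (p))`. -/
def Astar {n : ℕ} (xi N : E (n + 2) → E (n + 2)) (p v : E (n + 2)) : E (n + 2) :=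
  -sproj (xi p) (N p) (fderiv ℝ xi p v)

/-- Shape operator `A_N(p)(v) = -P_p(D_v N (p))`. -/
def AN {n : ℕ} (xi N : E (n + 2) → E (n + 2)) (p v : E (n + 2)) : E (n + 2) :=
  -sproj (xi p) (N p) (fderiv ℝ N p v)

/-- Transversal one-form `τ_p(v) = η(D_v N(p), ξ p)`. -/
def tau {n : ℕ} (xi N : E (n + 2) → E (n + 2)) (p v : E (n + 2)) : ℝ :=
  eta (fderiv ℝ N p v) (xi p)

/-- Screen part `Z*(p) = P_p(Z p)` of a vector field. -/
def Zstar {n : ℕ} (xi N Z : E (n + 2) → E (n + 2)) (p : E (n + 2)) : E (n + 2) :=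
  sproj (xi p) (N p) (Z p)

/-- `A_{Z⊥}(p)(v) = η(Z p, N p) • A*_ξ(p)(v) + η(Z p, ξ p) • A_N(p)(v)`. -/
def AZperp {n : ℕ} (xi N Z : E (n + 2) → E (n + 2)) (p v : E (n + 2)) : E (n + 2) :=
  eta (Z p) (N p) • Astar xi N p v + eta (Z p) (xi p) • AN xi N p v

section Minkowski

variable {n : ℕ}

def etaL : E (n + 2) →L[ℝ] E (n + 2) →L[ℝ] ℝ :=
  innerSL ℝ - (2 : ℝ) • (ContinuousLinearMap.mul ℝ ℝ).bilinearComp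
    (EuclideanSpace.proj 0) (EuclideanSpace.proj 0)

@[simp]
lemma etaL_apply (x y : E (n + 2)) : etaL x y = eta x y := by
  simp only [etaL, sub_apply, smul_apply, ContinuousLinearMap.bilinearComp_apply, PiLp.proj_apply,
    ContinuousLinearMap.mul_apply', smul_eq_mul, eta, sub_left_inj]
  rw [innerSL_apply_apply]
  simp [PiLp.inner_apply, mul_comm]

lemma eta_comm (x y : E (n + 2)) : eta x y = eta y x := by
  simp [eta, mul_comm]

lemma eta_sproj_left (xi N w v : E (n + 2)) :
    eta (sproj xi N w) v = eta w v - eta w N * eta xi v - eta w xi * eta N v := by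
  simp only [sproj, eta, PiLp.sub_apply, PiLp.smul_apply, smul_eq_mul, sub_mul,
    Finset.sum_sub_distrib, mul_assoc, ← Finset.mul_sum]
  ring

lemma eta_sproj_left_of_screen {xi N v : E (n + 2)} (hxi : eta v xi = 0) (hN : eta v N = 0)
    (w : E (n + 2)) : eta (sproj xi N w) v = eta w v := by
  rw [eta_sproj_left, eta_comm xi, eta_comm N, hxi, hN]
  ring

lemma HasFDerivAt.eta_self_of_conformal {Z : E (n + 2) → E (n + 2)} {c : ℝ} {p : E (n + 2)}
    (hZ : HasFDerivAt Z (c • ContinuousLinearMap.id ℝ (E (n + 2))) p) :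
    HasFDerivAt (fun q => eta (Z q) (Z q)) ((2 * c) • etaL (Z p)) p := by
  have h := etaL.hasFDerivAt_of_bilinear hZ hZ
  simp only [etaL_apply] at h
  refine h.congr_fderiv (ContinuousLinearMap.ext fun v => ?_)
  simp only [add_apply, smul_apply, map_smul, ContinuousLinearMap.precompR_apply,
    ContinuousLinearMap.precompL_apply, ContinuousLinearMap.compL_apply,
    ContinuousLinearMap.comp_id, ContinuousLinearMap.id_apply, etaL_apply, smul_eq_mul,
    eta_comm v (Z p)]
  ring

end Minkowski

lemma sign_eq_of_pos_mul {ε t : ℝ} (hε : ε = -1 ∨ ε = 1) (h : 0 < ε * t) :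
    (SignType.sign t : ℝ) = ε := by
  rcases hε with rfl | rfl
  · simp [sign_neg (by linarith : t < 0)]
  · simp [sign_pos (by linarith : 0 < t)]

theorem screen_gradient_norm_cc_field_general {n : ℕ}
    (U : Set (E (n + 2)))
    (ξ N Z : E (n + 2) → E (n + 2)) (φ : E (n + 2) → ℝ) (p : E (n + 2)) (hp : p ∈ U)
    (ε : ℝ) (hε : ε = -1 ∨ ε = 1)
    (hZd : ∀ q ∈ U, DifferentiableAt ℝ Z q)
    (hCC : ∀ q ∈ U, fderiv ℝ Z q = φ q • ContinuousLinearMap.id ℝ (E (n + 2)))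
    (hZ0 : eta (Z p) (Z p) ≠ 0)
    (hεZ : 0 < ε * eta (Z p) (Z p)) :
    (∀ v : E (n + 2),
      fderiv ℝ (fun q => Real.sqrt |eta (Z q) (Z q)|) p v =
        ε * φ p * eta (Z p) v / Real.sqrt |eta (Z p) (Z p)|) ∧
    (∀ v : E (n + 2), eta v (ξ p) = 0 → eta v (N p) = 0 →
      fderiv ℝ (fun q => Real.sqrt |eta (Z q) (Z q)|) p v =
        ε * φ p * eta (Zstar ξ N Z p) v / Real.sqrt |eta (Z p) (Z p)|) := by
  have hZ : HasFDerivAt Z (φ p • ContinuousLinearMap.id ℝ (E (n + 2))) p :=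
    hCC p hp ▸ (hZd p hp).hasFDerivAt
  have hnorm := (hZ.eta_self_of_conformal.abs hZ0).sqrt (abs_ne_zero.mpr hZ0)
  have hsign := sign_eq_of_pos_mul hε hεZ
  have grad : ∀ v : E (n + 2), fderiv ℝ (fun q => √|eta (Z q) (Z q)|) p v =
      ε * φ p * eta (Z p) v / √|eta (Z p) (Z p)| := by
    intro v
    rw [hnorm.fderiv]
    simp only [smul_apply, smul_eq_mul, etaL_apply, hsign]
    field_simp
  refine ⟨grad, fun v hvξ hvN => ?_⟩
  rw [grad, Zstar, eta_sproj_left_of_screen hvξ hvN]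

/-- The screen gradient of the norm of a closed conformal field:
`D_v |Z| = ε φ η(Z, v)/|Z|`, and for screen vectors `D_v |Z| = ε φ η(Z*, v)/|Z|`
(flat Minkowski ambient form of `∇*|Z| = (ε_Z φ/|Z|) Z*`). -/
theorem screen_gradient_norm_cc_field {n : ℕ}
    (U : Set (E (n + 2))) (hU : IsOpen U)
    (ξ N Z : E (n + 2) → E (n + 2)) (φ : E (n + 2) → ℝ) (p : E (n + 2)) (hp : p ∈ U)
    (ε : ℝ) (hε : ε = -1 ∨ ε = 1)
    (hZd : ∀ q ∈ U, DifferentiableAt ℝ Z q)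
    (hCC : ∀ q ∈ U, fderiv ℝ Z q = φ q • ContinuousLinearMap.id ℝ (E (n + 2)))
    (hZ0 : eta (Z p) (Z p) ≠ 0)
    (hεZ : 0 < ε * eta (Z p) (Z p))
    (hξξ : ∀ q ∈ U, eta (ξ q) (ξ q) = 0)
    (hNN : ∀ q ∈ U, eta (N q) (N q) = 0)
    (hξN : ∀ q ∈ U, eta (ξ q) (N q) = 1) :
    (∀ v : E (n + 2),
      fderiv ℝ (fun q => Real.sqrt |eta (Z q) (Z q)|) p v =
        ε * φ p * eta (Z p) v / Real.sqrt |eta (Z p) (Z p)|) ∧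
    (∀ v : E (n + 2), eta v (ξ p) = 0 → eta v (N p) = 0 →
      fderiv ℝ (fun q => Real.sqrt |eta (Z q) (Z q)|) p v =
        ε * φ p * eta (Zstar ξ N Z p) v / Real.sqrt |eta (Z p) (Z p)|) :=
  screen_gradient_norm_cc_field_general U ξ N Z φ p hp ε hε hZd hCC hZ0 hεZ

end
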